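/- Fix β ∈ ℝᵖ and τ ∈ ℝᵖ, and let v = A + Σⱼ τⱼβⱼ (A ∘ Xⱼ) ∈ ℝⁿ. Then ψ₀ = 0 is a global minimizer of the function ψ₀ ↦ Q(β₁,…,β_p, ψ₀, τ₁,…,τ_p) if and only if |(1/n)·vᵀW R₍₋A₎| ≤ λ(1−α), where vᵀW R₍₋A₎ = Σᵢ wᵢ vᵢ (R₍₋A₎)ᵢ. -/

import Mathlib

/-- Soft-thresholding operator `S(x, u) = sign(x) · (|x| − u)₊`. -/
noncomputable def softThresh (x u : ℝ) : ℝ := Real.sign x * max (|x| - u) 0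

/-- Reparametrized weighted loss
`L*(θ) = (1/(2n)) Σᵢ wᵢ (Yᵢ − ψ₀Aᵢ − Σⱼ Xᵢⱼβⱼ − Σⱼ ψ₀τⱼβⱼ AᵢXᵢⱼ)²`. -/
noncomputable def Lstar (n p : ℕ) (Y A : Fin n → ℝ) (X : Fin n → Fin p → ℝ)
    (w : Fin n → ℝ) (β : Fin p → ℝ) (ψ0 : ℝ) (τ : Fin p → ℝ) : ℝ :=
  1 / (2 * (n : ℝ)) * ∑ i, w i *
    (Y i - ψ0 * A i - (∑ j, X i j * β j) - ∑ j, ψ0 * τ j * β j * A i * X i j) ^ 2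

/-- Penalized objective
`Q(θ) = L*(θ) + λ(1−α)(Σⱼ|βⱼ| + |ψ₀|) + λα Σⱼ|τⱼ|`. -/
noncomputable def Qobj (n p : ℕ) (Y A : Fin n → ℝ) (X : Fin n → Fin p → ℝ)
    (w : Fin n → ℝ) (lam alpha : ℝ) (β : Fin p → ℝ) (ψ0 : ℝ) (τ : Fin p → ℝ) : ℝ :=
  Lstar n p Y A X w β ψ0 τ
    + lam * (1 - alpha) * ((∑ j, |β j|) + |ψ0|) + lam * alpha * ∑ j, |τ j|

/-! Substituting the partial residual, `Q(β, t, τ) - Q(β, 0, τ) = C t² - g t + λ(1-α)|t|` with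
`C = (1/2n) vᵀWv ≥ 0` and `g = (1/n) vᵀW R₍₋A₎`. Such a function is nonnegative everywhere
iff `|g| ≤ λ(1-α)`: the quadratic term is negligible near `0`, where the one-sided slopes
`λ(1-α) ∓ g` must be nonnegative, and conversely `g t ≤ |g| |t| ≤ λ(1-α) |t|`. -/

open Filter Topology

lemma le_of_forall_pos_le_add_mul {a b c : ℝ} (h : ∀ t > 0, a ≤ b + c * t) : a ≤ b := by
  have hlim : Tendsto (fun t : ℝ => b + c * t) (𝓝[>] 0) (𝓝 b) := by
    have : Continuous fun t : ℝ => b + c * t := by fun_prop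
    simpa using (this.tendsto 0).mono_left nhdsWithin_le_nhds
  exact ge_of_tendsto hlim (eventually_nhdsWithin_of_forall h)

lemma forall_nonneg_mul_sq_sub_mul_add_mul_abs_iff {C g L : ℝ} (hC : 0 ≤ C) :
    (∀ t : ℝ, 0 ≤ C * t ^ 2 - g * t + L * |t|) ↔ |g| ≤ L := by
  constructor
  · intro h
    have slope (s : ℝ) (hs : ∀ t > 0, 0 ≤ C * t ^ 2 - s * t + L * t) : s ≤ L := by
      refine le_of_forall_pos_le_add_mul (c := C) fun t ht => ?_
      have : 0 ≤ t * (C * t - s + L) := by linarith [hs t ht]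
      linarith [nonneg_of_mul_nonneg_right this ht]
    refine abs_le.mpr ⟨?_, slope g fun t ht => ?_⟩
    · have : -g ≤ L := slope (-g) fun t ht => by
        simpa [abs_of_pos ht] using h (-t)
      linarith
    · simpa [abs_of_pos ht] using h t
  · intro hg t
    have : g * t ≤ L * |t| :=
      calc g * t ≤ |g| * |t| := by rw [← abs_mul]; exact le_abs_self _
        _ ≤ L * |t| := mul_le_mul_of_nonneg_right hg (abs_nonneg t)
    nlinarith [sq_nonneg t]

lemma sum_mul_sub_mul_sq {ι : Type*} (s : Finset ι) (w r v : ι → ℝ) (t : ℝ) :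
    ∑ i ∈ s, w i * (r i - t * v i) ^ 2
      = ∑ i ∈ s, w i * r i ^ 2 - 2 * t * ∑ i ∈ s, w i * v i * r i
        + t ^ 2 * ∑ i ∈ s, w i * v i ^ 2 := by
  simp only [Finset.mul_sum, ← Finset.sum_sub_distrib, ← Finset.sum_add_distrib]
  exact Finset.sum_congr rfl fun i _ => by ring

lemma Lstar_eq_sum_sq (n p : ℕ) (Y A : Fin n → ℝ) (X : Fin n → Fin p → ℝ)
    (w : Fin n → ℝ) (β : Fin p → ℝ) (t : ℝ) (τ : Fin p → ℝ) :
    Lstar n p Y A X w β t τ = 1 / (2 * (n : ℝ)) * ∑ i, w i *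
      ((Y i - ∑ j, X i j * β j) - t * (A i + ∑ j, τ j * β j * A i * X i j)) ^ 2 := by
  unfold Lstar
  congr 1
  refine Finset.sum_congr rfl fun i _ => ?_
  have : ∑ j, t * τ j * β j * A i * X i j = t * ∑ j, τ j * β j * A i * X i j := by
    rw [Finset.mul_sum]; exact Finset.sum_congr rfl fun j _ => by ring
  rw [this]; ring

lemma Qobj_sub_Qobj_zero (n p : ℕ) (Y A : Fin n → ℝ) (X : Fin n → Fin p → ℝ)
    (w : Fin n → ℝ) (lam alpha : ℝ) (β : Fin p → ℝ) (t : ℝ) (τ : Fin p → ℝ) :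
    let v : Fin n → ℝ := fun i => A i + ∑ j, τ j * β j * A i * X i j
    let RA : Fin n → ℝ := fun i => Y i - ∑ j, X i j * β j
    Qobj n p Y A X w lam alpha β t τ - Qobj n p Y A X w lam alpha β 0 τ
      = (1 / (2 * (n : ℝ)) * ∑ i, w i * v i ^ 2) * t ^ 2
        - (1 / (n : ℝ) * ∑ i, w i * v i * RA i) * t + lam * (1 - alpha) * |t| := by
  intro v RA
  simp only [Qobj, Lstar_eq_sum_sq, sum_mul_sub_mul_sq]
  rw [abs_zero]
  ring

theorem stmt6_general (n p : ℕ) (Y A : Fin n → ℝ) (X : Fin n → Fin p → ℝ)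
    (w : Fin n → ℝ) (hw : ∀ i, 0 ≤ w i)
    (lam alpha : ℝ)
    (β τ : Fin p → ℝ)
    (v : Fin n → ℝ) (hv : v = fun i => A i + ∑ j, τ j * β j * A i * X i j) :
    let RA : Fin n → ℝ := fun i => Y i - ∑ j, X i j * β j
    let f : ℝ → ℝ := fun t => Qobj n p Y A X w lam alpha β t τ
    (∀ t : ℝ, f 0 ≤ f t) ↔
      |1 / (n : ℝ) * ∑ i, w i * v i * RA i| ≤ lam * (1 - alpha) := by
  intro RA f
  simp only [f]
  subst hv
  have hC : 0 ≤ 1 / (2 * (n : ℝ)) * ∑ i, w i * (A i + ∑ j, τ j * β j * A i * X i j) ^ 2 :=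
    mul_nonneg (by positivity) (Finset.sum_nonneg fun i _ => mul_nonneg (hw i) (sq_nonneg _))
  rw [← forall_nonneg_mul_sq_sub_mul_add_mul_abs_iff hC]
  refine forall_congr' fun t => ?_
  rw [← sub_nonneg, Qobj_sub_Qobj_zero]

/-- With `β`, `τ` fixed and `v = A + Σⱼ τⱼβⱼ (A ∘ Xⱼ)`, `ψ₀ = 0` is a global
minimizer of `ψ₀ ↦ Q(β, ψ₀, τ)` iff `|(1/n)·vᵀW R₍₋A₎| ≤ λ(1−α)`. -/
theorem stmt6 (n p : ℕ) (hn : 1 ≤ n) (Y A : Fin n → ℝ) (X : Fin n → Fin p → ℝ)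
    (w : Fin n → ℝ) (hw : ∀ i, 0 ≤ w i) (hA : ∀ i, A i = 0 ∨ A i = 1)
    (lam alpha : ℝ) (hlam : 0 ≤ lam) (halpha : 0 < alpha ∧ alpha < 1)
    (β τ : Fin p → ℝ)
    (v : Fin n → ℝ) (hv : v = fun i => A i + ∑ j, τ j * β j * A i * X i j) :
    let RA : Fin n → ℝ := fun i => Y i - ∑ j, X i j * β j
    let f : ℝ → ℝ := fun t => Qobj n p Y A X w lam alpha β t τ
    (∀ t : ℝ, f 0 ≤ f t) ↔
      |1 / (n : ℝ) * ∑ i, w i * v i * RA i| ≤ lam * (1 - alpha) :=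
  stmt6_general n p Y A X w hw lam alpha β τ v hv
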